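/- Assume the pair (c, κ) is admissible and λ ∈ (0, π²/(4c²κ)). Then for every a ∈ [0, 1−c], −A(a) ≥ ( (κ+1) − (κ−1)·cosh(√λ·(1−c)) )·sin(c√(κλ)), and moreover ( (κ+1) − (κ−1)·cosh(√λ·(1−c)) )·sin(c√(κλ)) > 0. -/

import Mathlib

/-- The threshold `c*` for `κ > 1`. -/
noncomputable def cStar (κ : ℝ) : ℝ :=
  1 / (1 + (2 * Real.sqrt κ / Real.pi) * Real.log ((Real.sqrt κ + 1) / (Real.sqrt κ - 1)))

/-- Admissibility of the pair `(c, κ)`. -/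
def Admissible (c κ : ℝ) : Prop :=
  (0 < κ ∧ κ ≤ 1 ∧ 0 < c ∧ c < 1) ∨ (1 < κ ∧ cStar κ < c ∧ c < 1)

/-- The coefficient `A(a)` of `β₀` in `∂_{β₁} f`. -/
noncomputable def A (c κ lam a : ℝ) : ℝ :=
  -2 * Real.sqrt κ * Real.cos (c * Real.sqrt (κ * lam)) * Real.sinh (Real.sqrt lam * (1 - c))
  + (κ - 1) * Real.sin (c * Real.sqrt (κ * lam)) * Real.cosh (Real.sqrt lam * (1 - c))
  - (κ + 1) * Real.sin (c * Real.sqrt (κ * lam)) * Real.cosh (Real.sqrt lam * (2 * a + c - 1))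

set_option maxHeartbeats 1600000 in
theorem stmt9 (c κ lam : ℝ) (hadm : Admissible c κ)
    (hlam : lam ∈ Set.Ioo 0 (Real.pi ^ 2 / (4 * c ^ 2 * κ))) :
    (∀ a ∈ Set.Icc (0:ℝ) (1 - c),
      ((κ + 1) - (κ - 1) * Real.cosh (Real.sqrt lam * (1 - c))) * Real.sin (c * Real.sqrt (κ * lam))
        ≤ -A c κ lam a) ∧
    0 < ((κ + 1) - (κ - 1) * Real.cosh (Real.sqrt lam * (1 - c))) * Real.sin (c * Real.sqrt (κ * lam)) := by
  obtain ⟨hlam0, hlamlt⟩ := hlam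
  set s := Real.sqrt κ with hs
  have hπ : (0:ℝ) < Real.pi := Real.pi_pos
  have hκ0 : 0 < κ := by
    rcases hadm with ⟨h, _⟩ | ⟨h, _⟩ <;> linarith
  have hs0 : 0 < s := Real.sqrt_pos.mpr hκ0
  have hs2 : s ^ 2 = κ := Real.sq_sqrt hκ0.le
  have hc1 : c < 1 := by
    rcases hadm with ⟨_, _, _, h⟩ | ⟨_, _, h⟩ <;> linarith
  -- positivity of c
  have hc0 : 0 < c := by
    rcases hadm with ⟨_, _, h, _⟩ | ⟨hκ1, hcs, _⟩
    · exact h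
    · have hs1 : 1 < s := by
        rw [hs, show (1:ℝ) = Real.sqrt 1 by simp]
        exact Real.sqrt_lt_sqrt (by norm_num) hκ1
      have hr : 1 < (s + 1) / (s - 1) := by
        rw [one_lt_div (by linarith)]; linarith
      have hL : 0 < Real.log ((s + 1) / (s - 1)) := Real.log_pos hr
      have hD : 0 < 1 + (2 * s / Real.pi) * Real.log ((s + 1) / (s - 1)) := by
        have : 0 < (2 * s / Real.pi) * Real.log ((s + 1) / (s - 1)) := by positivity
        linarith
      have : 0 < cStar κ := by
        rw [cStar]; positivity
      linarith
  have h1c : 0 < 1 - c := by linarith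
  have hlam4 : lam * (4 * c ^ 2 * κ) < Real.pi ^ 2 := by
    have h4 : (0:ℝ) < 4 * c ^ 2 * κ := by positivity
    exact (lt_div_iff₀ h4).mp hlamlt
  have hsqlam : 0 < Real.sqrt lam := Real.sqrt_pos.mpr hlam0
  -- the angle bounds
  have hθ0 : 0 < c * Real.sqrt (κ * lam) := by positivity
  have hθlt : c * Real.sqrt (κ * lam) < Real.pi / 2 := by
    have h1 : Real.sqrt (κ * lam) < Real.pi / (2 * c) := by
      rw [show Real.pi / (2 * c) = Real.sqrt ((Real.pi / (2 * c)) ^ 2) from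
        (Real.sqrt_sq (by positivity)).symm]
      apply Real.sqrt_lt_sqrt (by positivity)
      rw [div_pow, lt_div_iff₀ (by positivity)]
      nlinarith
    calc c * Real.sqrt (κ * lam) < c * (Real.pi / (2 * c)) :=
          mul_lt_mul_of_pos_left h1 hc0
      _ = Real.pi / 2 := by field_simp
  have hsin : 0 < Real.sin (c * Real.sqrt (κ * lam)) :=
    Real.sin_pos_of_pos_of_lt_pi hθ0 (by linarith)
  have hcos : 0 < Real.cos (c * Real.sqrt (κ * lam)) :=
    Real.cos_pos_of_mem_Ioo ⟨by linarith, hθlt⟩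
  have hsinh : 0 < Real.sinh (Real.sqrt lam * (1 - c)) :=
    Real.sinh_pos_iff.mpr (by positivity)
  -- the key positivity fact
  have hkey : (κ - 1) * Real.cosh (Real.sqrt lam * (1 - c)) < κ + 1 := by
    rcases hadm with ⟨_, hκ1, _⟩ | ⟨hκ1, hcs, _⟩
    · have hch : 0 < Real.cosh (Real.sqrt lam * (1 - c)) := Real.cosh_pos _
      nlinarith
    · have hs1 : 1 < s := by
        rw [hs, show (1:ℝ) = Real.sqrt 1 by simp]
        exact Real.sqrt_lt_sqrt (by norm_num) hκ1
      set L := Real.log ((s + 1) / (s - 1)) with hLdef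
      have hr0 : (0:ℝ) < (s + 1) / (s - 1) := div_pos (by linarith) (by linarith)
      have hr : 1 < (s + 1) / (s - 1) := by
        rw [one_lt_div (by linarith)]; linarith
      have hL : 0 < L := Real.log_pos hr
      have hD : 0 < 1 + (2 * s / Real.pi) * L := by
        have : 0 < (2 * s / Real.pi) * L := by positivity
        linarith
      have hcD : 1 < c * (1 + (2 * s / Real.pi) * L) := by
        have := hcs
        rw [cStar] at this
        exact (div_lt_iff₀ hD).mp this
      have hπL : Real.pi * (1 - c) < 2 * c * s * L := by
        have h := mul_lt_mul_of_pos_left hcD hπ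
        rw [mul_one] at h
        have hexp : Real.pi * (c * (1 + 2 * s / Real.pi * L)) =
            Real.pi * c + 2 * c * s * L := by field_simp
        rw [hexp] at h
        nlinarith
      -- √lam < π/(2cs)
      have hsl : Real.sqrt lam < Real.pi / (2 * c * s) := by
        rw [show Real.pi / (2 * c * s) = Real.sqrt ((Real.pi / (2 * c * s)) ^ 2) from
          (Real.sqrt_sq (by positivity)).symm]
        apply Real.sqrt_lt_sqrt hlam0.le
        rw [div_pow, lt_div_iff₀ (by positivity)]
        nlinarith
      have hXL : Real.sqrt lam * (1 - c) < L := by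
        have h1 : Real.sqrt lam * (1 - c) < Real.pi / (2 * c * s) * (1 - c) :=
          mul_lt_mul_of_pos_right hsl h1c
        have h2 : Real.pi / (2 * c * s) * (1 - c) < L := by
          rw [div_mul_eq_mul_div, div_lt_iff₀ (by positivity)]
          nlinarith
        linarith
      have hcosh : Real.cosh (Real.sqrt lam * (1 - c)) < Real.cosh L := by
        rw [Real.cosh_lt_cosh]
        rw [abs_of_pos (by positivity), abs_of_pos hL]
        exact hXL
      have hne : s - 1 ≠ 0 := by intro h; linarith
      have hne2 : s + 1 ≠ 0 := by intro h; linarith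
      have hκne : κ - 1 ≠ 0 := by intro h; nlinarith
      have hden : (s - 1) * (s + 1) * 2 ≠ 0 :=
        mul_ne_zero (mul_ne_zero hne hne2) two_ne_zero
      have hcoshL : Real.cosh L = (κ + 1) / (κ - 1) := by
        rw [hLdef, Real.cosh_eq, Real.exp_log hr0, ← Real.log_inv,
          Real.exp_log (inv_pos.mpr hr0), inv_div, div_add_div _ _ hne hne2, div_div,
          div_eq_div_iff hden hκne]
        linear_combination (-4 : ℝ) * hs2
      have : (κ - 1) * Real.cosh (Real.sqrt lam * (1 - c)) <
          (κ - 1) * Real.cosh L := mul_lt_mul_of_pos_left hcosh (by linarith)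
      rw [hcoshL, mul_div_cancel₀ _ (by linarith : κ - 1 ≠ 0)] at this
      exact this
  constructor
  · intro a ha
    obtain ⟨ha0, ha1⟩ := ha
    have hchY : 1 ≤ Real.cosh (Real.sqrt lam * (2 * a + c - 1)) := Real.one_le_cosh _
    have t1 : 0 ≤ 2 * s * Real.cos (c * Real.sqrt (κ * lam)) *
        Real.sinh (Real.sqrt lam * (1 - c)) := by positivity
    have t2 : 0 ≤ (κ + 1) * Real.sin (c * Real.sqrt (κ * lam)) *
        (Real.cosh (Real.sqrt lam * (2 * a + c - 1)) - 1) := by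
      apply mul_nonneg (by positivity); linarith
    simp only [A]
    rw [← hs]
    nlinarith [t1, t2]
  · exact mul_pos (by linarith) hsin
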